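/- arXiv:2512.14468 — 4 statements merged into one kernel-verified Lean document; each statement's English description precedes it below -/
import Mathlib

section
/- Assume 0 < δt ≤ 1/(2L), E is bounded below and level-bounded, the sequence (uⁿ) generated by the BapDCA_e algorithm converges to u*, and A satisfies the KL inequality with ψ(s) = c·s^{1−θ} for θ = 0 and some c > 0. Then there exists n₀ > 0 such that uⁿ = u^{n₀} for all n > n₀, i.e., the sequence is eventually constant. -/
open scoped RealInnerProductSpace
open Filter Topology

set_option maxHeartbeats 1000000

open scoped RealInnerProductSpace
open Filter Topology

lemma aux_le (a b C : ℝ) (h : ∀ t : ℝ, 0 < t → t ≤ 1 → b ≤ a + t * C) : b ≤ a := by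
  by_contra h'
  push_neg at h'
  set t : ℝ := min 1 ((b - a) / (2 * (|C| + 1))) with ht
  have hC : 0 ≤ |C| := abs_nonneg C
  have h0 : 0 < t := lt_min one_pos (div_pos (by linarith) (by linarith))
  have h2 := h t h0 (min_le_left _ _)
  have h3 : t * C ≤ t * |C| := mul_le_mul_of_nonneg_left (le_abs_self C) h0.le
  have h4 : t ≤ (b - a) / (2 * (|C| + 1)) := min_le_right _ _
  have h5 : t * (2 * (|C| + 1)) ≤ b - a := by
    rw [← le_div_iff₀ (by linarith)]; exact h4
  nlinarith

section Aux
variable {X : Type*} [NormedAddCommGroup X] [InnerProductSpace ℝ X]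

omit [InnerProductSpace ℝ X] in
lemma tendsto_pred {u : ℕ → X} {x : X} (h : Filter.Tendsto u Filter.atTop (nhds x)) :
    Filter.Tendsto (fun n => u (n - 1)) Filter.atTop (nhds x) :=
  h.comp (Filter.tendsto_atTop_atTop.mpr fun b => ⟨b + 1, fun n hn => by omega⟩)

omit [InnerProductSpace ℝ X] in
lemma tendsto_succ {u : ℕ → X} {x : X} (h : Filter.Tendsto u Filter.atTop (nhds x)) :
    Filter.Tendsto (fun n => u (n + 1)) Filter.atTop (nhds x) :=
  h.comp (Filter.tendsto_atTop_atTop.mpr fun b => ⟨b, fun n hn => by omega⟩)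

lemma grad_formula [FiniteDimensional ℝ X] (F : X → ℝ) (f : X → X)
    (hF : ∀ x, HasGradientAt F (f x) x) (δt : ℝ) (p q cst : X) :
    HasGradientAt (fun v => 1 / (4 * δt) * ‖v - p‖ ^ 2 - F v - ⟪cst, v - p⟫)
      ((1 / (2 * δt)) • (q - p) - f q - cst) q := by
  rw [hasGradientAt_iff_hasFDerivAt]
  have h1 : HasFDerivAt (fun v : X => ‖v - p‖ ^ 2)
      (2 • (innerSL ℝ (q - p))) q := by
    have := ((hasFDerivAt_id q).sub_const p).norm_sq
    simpa using this
  have h2 : HasFDerivAt (fun v : X => ⟪cst, v - p⟫) (innerSL ℝ cst) q := by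
    have : HasFDerivAt (fun v : X => (innerSL ℝ cst) (v - p)) (innerSL ℝ cst) q := by
      simpa [Function.comp_def] using ((innerSL ℝ cst).hasFDerivAt.comp q ((hasFDerivAt_id q).sub_const p))
    simpa using this
  have h3 := ((h1.const_mul (1 / (4 * δt))).sub (hF q).hasFDerivAt).sub h2
  convert h3 using 1
  · rfl
  · rfl
  ext v
  simp [InnerProductSpace.toDual_apply_apply, inner_sub_left, inner_smul_left, real_inner_smul_left,
    two_smul, inner_add_left]
  ext v
  simp [InnerProductSpace.toDual_apply_apply, inner_sub_left, inner_smul_left, real_inner_smul_left,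
    two_smul, inner_add_left]
  ring

lemma descent [FiniteDimensional ℝ X] (F : X → ℝ) (f : X → X)
    (hF : ∀ x, HasGradientAt F (f x) x)
    (L : ℝ) (hL : 0 < L) (hf : ∀ x y : X, ‖f x - f y‖ ≤ L * ‖x - y‖)
    (a b : X) : F b ≤ F a + ⟪f a, b - a⟫ + L / 2 * ‖b - a‖ ^ 2 := by
  set w := b - a with hw
  set φ : ℝ → ℝ := fun t => F (a + t • w) - t * ⟪f a, w⟫ - t ^ 2 * (L / 2 * ‖w‖ ^ 2) with hφ
  have hline : ∀ t : ℝ, HasDerivAt (fun s : ℝ => a + s • w) w t := by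
    intro t
    simpa using ((hasDerivAt_id t).smul_const w).const_add a
  have hder : ∀ t : ℝ, HasDerivAt φ (⟪f (a + t • w), w⟫ - ⟪f a, w⟫ - 2 * t * (L / 2 * ‖w‖ ^ 2)) t := by
    intro t
    have h1 : HasDerivAt (fun s : ℝ => F (a + s • w)) ⟪f (a + t • w), w⟫ t := by
      have := (hF (a + t • w)).hasFDerivAt.comp_hasDerivAt t (hline t)
      simpa [Function.comp_def] using this
    have h2 : HasDerivAt (fun s : ℝ => s * ⟪f a, w⟫) ⟪f a, w⟫ t := by
      simpa using (hasDerivAt_id t).mul_const (⟪f a, w⟫ : ℝ)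
    have h3 : HasDerivAt (fun s : ℝ => s ^ 2 * (L / 2 * ‖w‖ ^ 2)) (2 * t * (L / 2 * ‖w‖ ^ 2)) t := by
      have := (hasDerivAt_pow 2 t).mul_const (L / 2 * ‖w‖ ^ 2)
      simpa [mul_comm] using this
    exact (h1.sub h2).sub h3
  have hmono : AntitoneOn φ (Set.Icc (0:ℝ) 1) := by
    apply antitoneOn_of_deriv_nonpos (convex_Icc 0 1)
    · exact (fun t _ => ((hder t).differentiableAt).continuousAt.continuousWithinAt :
        ContinuousOn φ (Set.Icc 0 1))
    · intro t ht
      exact ((hder t).differentiableAt).differentiableWithinAt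
    · intro t ht
      rw [interior_Icc, Set.mem_Ioo] at ht
      rw [(hder t).deriv]
      have hcs : ⟪f (a + t • w) - f a, w⟫ ≤ ‖f (a + t • w) - f a‖ * ‖w‖ :=
        real_inner_le_norm _ _
      have hlip : ‖f (a + t • w) - f a‖ ≤ L * (t * ‖w‖) := by
        have := hf (a + t • w) a
        simpa [norm_smul, abs_of_pos ht.1] using this
      have hw0 : (0:ℝ) ≤ ‖w‖ := norm_nonneg _
      have := mul_le_mul_of_nonneg_right hlip hw0
      rw [inner_sub_left] at hcs
      nlinarith
  have := hmono (Set.left_mem_Icc.2 one_pos.le) (Set.right_mem_Icc.2 one_pos.le) one_pos.le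
  simp only [hφ] at this
  have hab : a + (1:ℝ) • w = b := by simp [hw]
  rw [hab] at this
  norm_num at this
  linarith [this]

lemma sub_opt (H : X → ℝ) (hH : ConvexOn ℝ Set.univ H)
    (δt : ℝ) (hδt : 0 < δt) (M : X →L[ℝ] X)
    (hMsa : ∀ x y : X, ⟪M x, y⟫ = ⟪x, M y⟫)
    (q yn r G : X) (g : X → ℝ)
    (hg : ∀ v, g v = H v + 3 / (4 * δt) * ‖v - q‖ ^ 2 - ⟪G, v⟫
      + 1 / 2 * ⟪M (v - yn), v - yn⟫)
    (hmin : ∀ v, g r ≤ g v) (z : X) :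
    H r + ⟪G - (3 / (2 * δt)) • (r - q) - M (r - yn), z - r⟫ ≤ H z := by
  set w := z - r with hw
  set C : ℝ := 3 / (4 * δt) * ‖w‖ ^ 2 + 1 / 2 * ⟪M w, w⟫ with hC
  have hE5 : ⟪G - (3 / (2 * δt)) • (r - q) - M (r - yn), w⟫
      = ⟪G, w⟫ - 3 / (2 * δt) * ⟪r - q, w⟫ - ⟪M (r - yn), w⟫ := by
    simp [inner_sub_left, real_inner_smul_left]
  rw [hE5]
  apply aux_le (H z) _ C
  intro t ht0 ht1
  have hgr := hmin (r + t • w)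
  have hv : r + t • w - q = (r - q) + t • w := by abel
  have hE1 : ‖r + t • w - q‖ ^ 2
      = ‖r - q‖ ^ 2 + 2 * t * ⟪r - q, w⟫ + t ^ 2 * ‖w‖ ^ 2 := by
    rw [hv, norm_add_sq_real, real_inner_smul_right, norm_smul]
    simp [mul_pow, abs_of_pos ht0]
    ring
  have hv2 : r + t • w - yn = (r - yn) + t • w := by abel
  have hE2 : ⟪M (r + t • w - yn), r + t • w - yn⟫
      = ⟪M (r - yn), r - yn⟫ + 2 * t * ⟪M (r - yn), w⟫ + t ^ 2 * ⟪M w, w⟫ := by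
    rw [hv2]
    have hsym : ⟪M w, r - yn⟫ = ⟪M (r - yn), w⟫ := by
      rw [hMsa, real_inner_comm]
    simp [inner_add_left, inner_add_right, map_add, map_smul, real_inner_smul_left,
      real_inner_smul_right, hsym]
    ring
  have hE3 : ⟪G, r + t • w⟫ = ⟪G, r⟫ + t * ⟪G, w⟫ := by
    simp [inner_add_right, real_inner_smul_right]
  have hE4 : H (r + t • w) ≤ H r + t * (H z - H r) := by
    have hcvx := hH.2 (Set.mem_univ r) (Set.mem_univ z) (by linarith : (0:ℝ) ≤ 1 - t)
      ht0.le (by ring)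
    have hpt : (1 - t) • r + t • z = r + t • w := by
      rw [hw]; module
    rw [hpt] at hcvx
    simp only [smul_eq_mul] at hcvx
    linarith [hcvx]
  rw [hg r, hg (r + t • w), hE1, hE2, hE3] at hgr
  have ineq0 : 0 ≤ t * (H z - H r) + 3 / (4 * δt) * (2 * t * ⟪r - q, w⟫ + t ^ 2 * ‖w‖ ^ 2)
      - t * ⟪G, w⟫ + 1 / 2 * (2 * t * ⟪M (r - yn), w⟫ + t ^ 2 * ⟪M w, w⟫) := by
    nlinarith [hgr, hE4]
  have hkey : t * ((H z - H r) - ⟪G, w⟫ + 3 / (2 * δt) * ⟪r - q, w⟫ + ⟪M (r - yn), w⟫ + t * C)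
      = t * (H z - H r) + 3 / (4 * δt) * (2 * t * ⟪r - q, w⟫ + t ^ 2 * ‖w‖ ^ 2)
      - t * ⟪G, w⟫ + 1 / 2 * (2 * t * ⟪M (r - yn), w⟫ + t ^ 2 * ⟪M w, w⟫) := by
    rw [hC]
    field_simp
    ring
  rw [← hkey] at ineq0
  have := nonneg_of_mul_nonneg_right ineq0 ht0
  linarith

lemma decrease (H F : X → ℝ) (fq fp : X) (L δt : ℝ) (M : X →L[ℝ] X)
    (hL : 0 < L) (hδt : 0 < δt) (hδtL : δt ≤ 1 / (2 * L))
    (hMsa : ∀ x y : X, ⟪M x, y⟫ = ⟪x, M y⟫) (hMpsd : ∀ x : X, 0 ≤ ⟪M x, x⟫)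
    (β : ℝ) (hβ0 : 0 ≤ β) (hβ1 : β < 1)
    (p q r yn G : X)
    (hyn : yn = q + β • (q - p))
    (hG : G = (1 / (2 * δt)) • (q - p) - fq - (fq - fp))
    (hsub : H r + ⟪G - (3 / (2 * δt)) • (r - q) - M (r - yn), q - r⟫ ≤ H q)
    (hdes : F r ≤ F q + ⟪fq, r - q⟫ + L / 2 * ‖r - q‖ ^ 2)
    (hlip : ‖fq - fp‖ ≤ L * ‖q - p‖)
    (A : X → X → ℝ)
    (hA : ∀ x z, A x z = (H x + F x) + 1 / (4 * δt) * ‖x - z‖ ^ 2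
      + L / 2 * ‖x - z‖ ^ 2 + 1 / 2 * ⟪M (x - z), x - z⟫) :
    A r q + L / 2 * ‖r - q‖ ^ 2 ≤ A q p := by
  set d := r - q with hd
  set dp := q - p with hdp
  set nd := ‖d‖ ^ 2 with hnd
  set np := ‖dp‖ ^ 2 with hnp
  set ip : ℝ := ⟪dp, d⟫ with hip
  set mdd : ℝ := ⟪M d, d⟫ with hmdd
  set mpp : ℝ := ⟪M dp, dp⟫ with hmpp
  set mdp : ℝ := ⟪M d, dp⟫ with hmdp
  have hryn : r - yn = d - β • dp := by rw [hyn, hd, hdp]; abel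
  have msym : ⟪M dp, d⟫ = mdp := by rw [hmdp, hMsa, real_inner_comm]
  have hξ : ⟪G - (3 / (2 * δt)) • (r - q) - M (r - yn), q - r⟫
      = -(1 / (2 * δt) * ip - ⟪fq, d⟫ - ⟪fq - fp, d⟫ - 3 / (2 * δt) * nd - mdd + β * mdp) := by
    have hqr : q - r = -d := by rw [hd]; abel
    rw [hqr, hG, hryn, inner_neg_right]
    simp only [map_sub, map_smul, inner_sub_left, real_inner_smul_left, msym]
    rw [hnd, ← real_inner_self_eq_norm_sq]
    ring_nf
    have hdd : (inner ℝ d d : ℝ) = inner ℝ r d - inner ℝ q d := by rw [hd, inner_sub_left]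
    rw [hdd]
    ring
  have y1 : 2 * ip ≤ np + nd := by
    have h0 : (0:ℝ) ≤ ‖dp - d‖ ^ 2 := sq_nonneg _
    rw [norm_sub_sq_real] at h0
    rw [hip, hnp, hnd]; linarith
  have y2 : -⟪fq - fp, d⟫ ≤ L / 2 * np + L / 2 * nd := by
    have h1 : ⟪fp - fq, d⟫ ≤ ‖fp - fq‖ * ‖d‖ := real_inner_le_norm _ _
    have h2 : ‖fp - fq‖ = ‖fq - fp‖ := norm_sub_rev _ _
    have h3 : ‖fq - fp‖ * ‖d‖ ≤ L * ‖dp‖ * ‖d‖ := by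
      apply mul_le_mul_of_nonneg_right _ (norm_nonneg _)
      simpa [hdp] using hlip
    have h4 : 2 * (‖dp‖ * ‖d‖) ≤ np + nd := by
      rw [hnp, hnd]; nlinarith [sq_nonneg (‖dp‖ - ‖d‖)]
    have h5 : ⟪fp - fq, d⟫ = -⟪fq - fp, d⟫ := by
      rw [← inner_neg_left]; congr 1; abel
    nlinarith [norm_nonneg d, norm_nonneg dp]
  have m1 : 0 ≤ mdd := hMpsd d
  have m2 : 0 ≤ mpp := hMpsd dp
  have m3 : 2 * mdp ≤ mdd + mpp := by
    have h0 := hMpsd (d - dp)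
    simp only [map_sub, inner_sub_left, inner_sub_right] at h0
    have : ⟪M d, dp⟫ = ⟪M dp, d⟫ := msym.symm
    rw [hmdd, hmpp, hmdp]; linarith [h0, this]
  have mβ : β * mdp ≤ 1 / 2 * mdd + 1 / 2 * mpp := by
    rcases le_or_gt 0 mdp with h | h
    · nlinarith
    · nlinarith
  have hs : 2 * L ≤ 1 / δt := by
    rw [le_div_iff₀ hδt]
    rw [le_div_iff₀ (by linarith : 0 < 2 * L)] at hδtL
    linarith
  have hsd : 0 ≤ (1 / δt - 2 * L) * nd := by
    apply mul_nonneg (by linarith) (by rw [hnd]; positivity)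
  have y1' : 0 ≤ 1 / δt * (np + nd - 2 * ip) := by
    apply mul_nonneg (by positivity) (by linarith)
  rw [hA r q, hA q p]
  simp only [← hd, ← hdp, ← hnd, ← hnp, ← hmdd, ← hmpp]
  rw [hξ] at hsub
  have e1 : 1 / (2 * δt) = 1 / δt * (1 / 2) := by field_simp
  have e2 : 3 / (2 * δt) = 1 / δt * (3 / 2) := by field_simp
  have e3 : 1 / (4 * δt) = 1 / δt * (1 / 4) := by field_simp
  rw [e1, e2] at hsub
  rw [e3]
  nlinarith [hsub, hdes, y1, y2, mβ, hsd, y1']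

end Aux


/-- Theorem 3.7(i): if `A` satisfies the KL inequality with `ψ(s) = c·s` (exponent θ = 0), the iterates are eventually constant. -/
theorem stmt_10
    {X : Type*} [NormedAddCommGroup X] [InnerProductSpace ℝ X] [FiniteDimensional ℝ X]
    (H F : X → ℝ) (f : X → X) (L δt : ℝ) (M : X →L[ℝ] X)
    (hH : ConvexOn ℝ Set.univ H) (hHcont : Continuous H)
    (hF : ∀ x, HasGradientAt F (f x) x)
    (hL : 0 < L) (hf : ∀ x y : X, ‖f x - f y‖ ≤ L * ‖x - y‖)
    (hδt : 0 < δt)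
    (hMsa : ∀ x y : X, ⟪M x, y⟫ = ⟪x, M y⟫) (hMpsd : ∀ x : X, 0 ≤ ⟪M x, x⟫)
    (u : ℕ → X) (β : ℕ → ℝ) (hβ : ∀ n, β n ∈ Set.Ico (0 : ℝ) 1)
    (y : ℕ → X) (hy : ∀ n, y n = u n + β n • (u n - u (n - 1)))
    (Fn : ℕ → X → ℝ)
    (hFn : ∀ n v, Fn n v = 1 / (4 * δt) * ‖v - u (n - 1)‖ ^ 2 - F v
      - ⟪f (u n) - f (u (n - 1)), v - u (n - 1)⟫)
    (g : ℕ → X → ℝ)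
    (hg : ∀ n v, g n v = H v + 3 / (4 * δt) * ‖v - u n‖ ^ 2
      - ⟪gradient (Fn n) (u n), v⟫ + 1 / 2 * ⟪M (v - y n), v - y n⟫)
    (hmin : ∀ n v, g n (u (n + 1)) ≤ g n v)
    (hδtL : δt ≤ 1 / (2 * L))
    (hEbdd : ∃ B : ℝ, ∀ x : X, B ≤ H x + F x)
    (hlev : ∀ a : ℝ, Bornology.IsBounded {x : X | H x + F x ≤ a})
    (A : X → X → ℝ)
    (hA : ∀ x z, A x z = (H x + F x) + 1 / (4 * δt) * ‖x - z‖ ^ 2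
      + L / 2 * ‖x - z‖ ^ 2 + 1 / 2 * ⟪M (x - z), x - z⟫)
    (subH : X → Set X)
    (hsubH : ∀ x, subH x = {ξ : X | ∀ z, H x + ⟪ξ, z - x⟫ ≤ H z})
    (CM : X → X)
    (hCM : ∀ v, CM v = (1 / (2 * δt) + L) • v + M v)
    (subA : X → X → Set (X × X))
    (hsubA : ∀ x z, subA x z
      = {p : X × X | ∃ ξ ∈ subH x, p = (ξ + f x + CM (x - z), -CM (x - z))})
    (c : ℝ) (hc : 0 < c)
    (hKL : ∀ xb yb : X, (0, 0) ∈ subA xb yb →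
      ∃ ν : ℝ, 0 < ν ∧ ∃ O : Set (X × X), IsOpen O ∧ (xb, yb) ∈ O ∧
        ∀ x z : X, (x, z) ∈ O → A xb yb < A x z → A x z < A xb yb + ν →
          1 ≤ c * Metric.infDist ((0, 0) : X × X) (subA x z))
    (ustar : X) (hconv : Filter.Tendsto u Filter.atTop (nhds ustar))
    :
    ∃ n₀ : ℕ, 0 < n₀ ∧ ∀ n : ℕ, n₀ < n → u n = u n₀ := by
  -- explicit gradient of Fn
  have hgrad : ∀ n, gradient (Fn n) (u n)
      = (1 / (2 * δt)) • (u n - u (n - 1)) - f (u n) - (f (u n) - f (u (n - 1))) := by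
    intro n
    have hFneq : Fn n = fun v => 1 / (4 * δt) * ‖v - u (n - 1)‖ ^ 2 - F v
        - ⟪f (u n) - f (u (n - 1)), v - u (n - 1)⟫ := funext (hFn n)
    rw [hFneq]
    exact (grad_formula F f hF δt (u (n - 1)) (u n) (f (u n) - f (u (n - 1)))).gradient
  -- subgradients at each iterate
  set ξ : ℕ → X := fun n => gradient (Fn n) (u n)
    - (3 / (2 * δt)) • (u (n + 1) - u n) - M (u (n + 1) - y n) with hξdef
  have hsub : ∀ n z, H (u (n + 1)) + ⟪ξ n, z - u (n + 1)⟫ ≤ H z := by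
    intro n z
    exact sub_opt H hH δt hδt M hMsa (u n) (y n) (u (n + 1)) (gradient (Fn n) (u n))
      (g n) (hg n) (hmin n) z
  -- sufficient decrease
  have hdec : ∀ n, A (u (n + 1)) (u n) + L / 2 * ‖u (n + 1) - u n‖ ^ 2
      ≤ A (u n) (u (n - 1)) := by
    intro n
    apply decrease H F (f (u n)) (f (u (n - 1))) L δt M hL hδt hδtL hMsa hMpsd
      (β n) (hβ n).1 (hβ n).2 (u (n - 1)) (u n) (u (n + 1)) (y n)
      (gradient (Fn n) (u n)) (hy n) (hgrad n) _
      (descent F f hF L hL hf (u n) (u (n + 1))) (hf (u n) (u (n - 1))) A hA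
    exact hsub n (u n)
  -- continuity facts
  have hfc : Continuous f := by
    have hlw : LipschitzWith (Real.toNNReal L) f := by
      rw [lipschitzWith_iff_dist_le_mul]
      intro a b
      rw [dist_eq_norm, dist_eq_norm, Real.coe_toNNReal L hL.le]
      exact hf a b
    exact hlw.continuous
  have hFc : Continuous F := by
    have : Differentiable ℝ F := fun x => (hF x).differentiableAt
    exact this.continuous
  have hAc : Continuous (fun pr : X × X => A pr.1 pr.2) := by
    have hAe : (fun pr : X × X => A pr.1 pr.2)
        = fun pr : X × X => (H pr.1 + F pr.1) + 1 / (4 * δt) * ‖pr.1 - pr.2‖ ^ 2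
          + L / 2 * ‖pr.1 - pr.2‖ ^ 2 + 1 / 2 * ⟪M (pr.1 - pr.2), pr.1 - pr.2⟫ := by
      funext pr; exact hA pr.1 pr.2
    rw [hAe]
    have c1 : Continuous fun pr : X × X => pr.1 - pr.2 := continuous_fst.sub continuous_snd
    have c2 : Continuous fun pr : X × X => (⟪M (pr.1 - pr.2), pr.1 - pr.2⟫ : ℝ) :=
      (M.continuous.comp c1).inner c1
    have c3 : Continuous fun pr : X × X => ‖pr.1 - pr.2‖ ^ 2 := (c1.norm).pow 2
    exact ((((hHcont.comp continuous_fst).add (hFc.comp continuous_fst)).add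
      (continuous_const.mul c3)).add (continuous_const.mul c3)).add (continuous_const.mul c2)
  -- limits of iterates
  have t_pred := tendsto_pred hconv
  have t_succ := tendsto_succ hconv
  have t_d : Filter.Tendsto (fun n => u (n + 1) - u n) Filter.atTop (nhds 0) := by
    simpa using t_succ.sub hconv
  have t_dp : Filter.Tendsto (fun n => u n - u (n - 1)) Filter.atTop (nhds 0) := by
    simpa using hconv.sub t_pred
  have t_βdp : Filter.Tendsto (fun n => β n • (u n - u (n - 1))) Filter.atTop (nhds 0) := by
    have hb : ∀ n, ‖β n • (u n - u (n - 1))‖ ≤ ‖u n - u (n - 1)‖ := by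
      intro n
      rw [norm_smul, Real.norm_eq_abs, abs_of_nonneg (hβ n).1]
      calc β n * ‖u n - u (n - 1)‖ ≤ 1 * ‖u n - u (n - 1)‖ :=
        mul_le_mul_of_nonneg_right (hβ n).2.le (norm_nonneg _)
      _ = ‖u n - u (n - 1)‖ := one_mul _
    have ht : Filter.Tendsto (fun n => ‖u n - u (n - 1)‖) Filter.atTop (nhds 0) := by
      simpa using t_dp.norm
    exact squeeze_zero_norm hb ht
  have t_ry : Filter.Tendsto (fun n => u (n + 1) - y n) Filter.atTop (nhds 0) := by
    have : (fun n => u (n + 1) - y n)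
        = fun n => (u (n + 1) - u n) - β n • (u n - u (n - 1)) := by
      funext n; rw [hy n]; abel
    rw [this]
    simpa using t_d.sub t_βdp
  have t_ξ : Filter.Tendsto ξ Filter.atTop (nhds (-f ustar)) := by
    have hξe : ξ = fun n => (1 / (2 * δt)) • (u n - u (n - 1)) - f (u n)
        - (f (u n) - f (u (n - 1)))
        - (3 / (2 * δt)) • (u (n + 1) - u n) - M (u (n + 1) - y n) := by
      funext n; rw [hξdef]; simp only [hgrad n]
    rw [hξe]
    have l1 : Filter.Tendsto (fun n => (1 / (2 * δt)) • (u n - u (n - 1)))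
        Filter.atTop (nhds 0) := by simpa using t_dp.const_smul (1 / (2 * δt))
    have l2 : Filter.Tendsto (fun n => f (u n)) Filter.atTop (nhds (f ustar)) :=
      (hfc.tendsto ustar).comp hconv
    have l3 : Filter.Tendsto (fun n => f (u (n - 1))) Filter.atTop (nhds (f ustar)) :=
      (hfc.tendsto ustar).comp t_pred
    have l4 : Filter.Tendsto (fun n => (3 / (2 * δt)) • (u (n + 1) - u n))
        Filter.atTop (nhds 0) := by simpa using t_d.const_smul (3 / (2 * δt))
    have l5 : Filter.Tendsto (fun n => M (u (n + 1) - y n)) Filter.atTop (nhds 0) := by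
      have := (M.continuous.tendsto 0).comp t_ry
      simpa only [Function.comp_def, map_zero] using this
    have := ((((l1.sub l2).sub (l2.sub l3)).sub l4).sub l5)
    simpa using this
  -- criticality of (ustar, ustar)
  have hcrit : ∀ z, H ustar + ⟪-f ustar, z - ustar⟫ ≤ H z := by
    intro z
    have hlhs : Filter.Tendsto (fun n => H (u (n + 1)) + ⟪ξ n, z - u (n + 1)⟫)
        Filter.atTop (nhds (H ustar + ⟪-f ustar, z - ustar⟫)) := by
      have h1 : Filter.Tendsto (fun n => H (u (n + 1))) Filter.atTop (nhds (H ustar)) :=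
        (hHcont.tendsto ustar).comp t_succ
      have h2 : Filter.Tendsto (fun n => (⟪ξ n, z - u (n + 1)⟫ : ℝ))
          Filter.atTop (nhds ⟪-f ustar, z - ustar⟫) := by
        have h3 : Filter.Tendsto (fun n => z - u (n + 1)) Filter.atTop (nhds (z - ustar)) :=
          tendsto_const_nhds.sub t_succ
        exact (Filter.Tendsto.inner t_ξ h3)
      exact h1.add h2
    exact le_of_tendsto hlhs (Filter.Eventually.of_forall fun n => hsub n z)
  have hmem0 : ((0 : X), (0 : X)) ∈ subA ustar ustar := by
    rw [hsubA]
    refine ⟨-f ustar, ?_, ?_⟩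
    · rw [hsubH]; exact hcrit
    · have hz : CM (ustar - ustar) = 0 := by
        rw [sub_self, hCM]; simp
      rw [hz]
      simp
  -- apply KL
  obtain ⟨ν, hν, O, hO, hmemO, hKLloc⟩ := hKL ustar ustar hmem0
  -- sequence a n
  set a : ℕ → ℝ := fun n => A (u (n + 1)) (u n) with hadef
  have ha_succ : ∀ n, a (n + 1) + L / 2 * ‖u (n + 2) - u (n + 1)‖ ^ 2 ≤ a n := by
    intro n
    have := hdec (n + 1)
    simpa [hadef] using this
  have h_anti : Antitone a := by
    apply antitone_nat_of_succ_le
    intro n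
    have := ha_succ n
    nlinarith [sq_nonneg ‖u (n + 2) - u (n + 1)‖]
  have t_pair : Filter.Tendsto (fun n => (u (n + 1), u n)) Filter.atTop
      (nhds (ustar, ustar)) := t_succ.prodMk_nhds hconv
  have ha_tend : Filter.Tendsto a Filter.atTop (nhds (A ustar ustar)) := by
    have := (hAc.tendsto (ustar, ustar)).comp t_pair
    simpa [hadef, Function.comp_def] using this
  have ha_ge : ∀ n, A ustar ustar ≤ a n := fun n =>
    le_of_tendsto ha_tend (Filter.eventually_atTop.2 ⟨n, fun m hm => h_anti hm⟩)
  -- the element of subA at iterates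
  have helt : ∀ n, (ξ n + f (u (n + 1)) + CM (u (n + 1) - u n), -CM (u (n + 1) - u n))
      ∈ subA (u (n + 1)) (u n) := by
    intro n
    rw [hsubA]
    exact ⟨ξ n, by rw [hsubH]; exact hsub n, rfl⟩
  have t_CM : Filter.Tendsto (fun n => CM (u (n + 1) - u n)) Filter.atTop (nhds 0) := by
    have hCMe : (fun n => CM (u (n + 1) - u n))
        = fun n => (1 / (2 * δt) + L) • (u (n + 1) - u n) + M (u (n + 1) - u n) := by
      funext n; exact hCM _
    rw [hCMe]
    have l1 := t_d.const_smul (1 / (2 * δt) + L)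
    have l2 : Filter.Tendsto (fun n => M (u (n + 1) - u n)) Filter.atTop (nhds 0) := by
      have := (M.continuous.tendsto 0).comp t_d
      simpa only [Function.comp_def, map_zero] using this
    simpa using l1.add l2
  have t_elt : Filter.Tendsto
      (fun n => ((ξ n + f (u (n + 1)) + CM (u (n + 1) - u n), -CM (u (n + 1) - u n)) : X × X))
      Filter.atTop (nhds (0, 0)) := by
    have l2 : Filter.Tendsto (fun n => f (u (n + 1))) Filter.atTop (nhds (f ustar)) :=
      (hfc.tendsto ustar).comp t_succ
    have c1 : Filter.Tendsto (fun n => ξ n + f (u (n + 1)) + CM (u (n + 1) - u n))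
        Filter.atTop (nhds 0) := by
      have := (t_ξ.add l2).add t_CM
      simpa using this
    have c2 : Filter.Tendsto (fun n => -CM (u (n + 1) - u n)) Filter.atTop (nhds 0) := by
      simpa using t_CM.neg
    exact c1.prodMk_nhds c2
  have t_dist : Filter.Tendsto
      (fun n => Metric.infDist ((0, 0) : X × X) (subA (u (n + 1)) (u n)))
      Filter.atTop (nhds 0) := by
    apply squeeze_zero (fun n => Metric.infDist_nonneg)
      (g := fun n => dist ((0, 0) : X × X)
        ((ξ n + f (u (n + 1)) + CM (u (n + 1) - u n), -CM (u (n + 1) - u n)) : X × X))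
    · intro n
      exact Metric.infDist_le_dist_of_mem (helt n)
    · have := tendsto_iff_dist_tendsto_zero.mp t_elt
      simpa [dist_comm] using this
  -- eventual facts
  have E1 : ∀ᶠ n in Filter.atTop, (u (n + 1), u n) ∈ O :=
    t_pair.eventually (hO.mem_nhds hmemO)
  have E2 : ∀ᶠ n in Filter.atTop, a n < A ustar ustar + ν :=
    ha_tend.eventually_lt_const (by linarith)
  have E3 : ∀ᶠ n in Filter.atTop,
      c * Metric.infDist ((0, 0) : X × X) (subA (u (n + 1)) (u n)) < 1 := by
    have := t_dist.const_mul c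
    rw [mul_zero] at this
    exact this.eventually_lt_const one_pos
  have Ekey : ∀ᶠ n in Filter.atTop, a n = A ustar ustar := by
    filter_upwards [E1, E2, E3] with n h1 h2 h3
    by_contra hne
    have hgt : A ustar ustar < a n := lt_of_le_of_ne (ha_ge n) (Ne.symm hne)
    have := hKLloc (u (n + 1)) (u n) h1 hgt h2
    linarith
  obtain ⟨N, hN⟩ := Filter.eventually_atTop.1 Ekey
  -- for n ≥ N, the iterates freeze
  have hfreeze : ∀ n, N ≤ n → u (n + 2) = u (n + 1) := by
    intro n hn
    have h1 : a (n + 1) = A ustar ustar := hN (n + 1) (by omega)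
    have h2 : a n = A ustar ustar := hN n hn
    have h3 := ha_succ n
    rw [h1, h2] at h3
    have h4 : ‖u (n + 2) - u (n + 1)‖ ^ 2 ≤ 0 := by nlinarith
    have h5 : ‖u (n + 2) - u (n + 1)‖ = 0 := by
      nlinarith [norm_nonneg (u (n + 2) - u (n + 1)), sq_nonneg ‖u (n + 2) - u (n + 1)‖]
    have := norm_eq_zero.mp h5
    have := sub_eq_zero.mp this
    exact this
  refine ⟨N + 2, by omega, ?_⟩
  have hstep : ∀ n, N + 2 ≤ n → u n = u (N + 2) := by
    intro n hn
    induction n with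
    | zero => omega
    | succ m ih =>
      rcases Nat.lt_or_ge (N + 2) (m + 1) with hlt | hge
      · have hm : N + 2 ≤ m := by omega
        have := hfreeze (m - 1) (by omega)
        have hm1 : m - 1 + 2 = m + 1 := by omega
        have hm2 : m - 1 + 1 = m := by omega
        rw [hm1, hm2] at this
        rw [this]
        exact ih hm
      · have : m + 1 = N + 2 := by omega
        rw [this]
  intro n hn
  exact hstep n (by omega)
end

section
/- Let (aₙ)_{n ≥ 0} and (dₙ)_{n ≥ 0} be sequences of nonnegative real numbers with (dₙ) nonincreasing, let c ≥ 0, and let T ∈ ℕ. If for all n ≥ T one has a_{n+2} ≤ c·(dₙ − d_{n+1}) + (1/4)·(aₙ + a_{n+1}), then the series Σ_{n} aₙ converges; moreover Σ_{n=T}^{∞} a_{n+2} ≤ 2c·d_T + (1/2)·a_T + a_{T+1}. -/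
/-- abstract summability lemma. If a nonnegative sequence `a`
satisfies `a_{n+2} ≤ c(dₙ − d_{n+1}) + (1/4)(aₙ + a_{n+1})` for all `n ≥ T`,
where `d` is nonnegative nonincreasing and `c ≥ 0`, then `Σ aₙ` converges and
`Σ_{n=T}^∞ a_{n+2} ≤ 2c·d_T + (1/2)a_T + a_{T+1}`. -/
theorem stmt_13 (a d : ℕ → ℝ) (c : ℝ) (T : ℕ)
    (ha : ∀ n, 0 ≤ a n) (hd : ∀ n, 0 ≤ d n)
    (hdmono : ∀ n, d (n + 1) ≤ d n) (hc : 0 ≤ c)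
    (hrec : ∀ n, T ≤ n → a (n + 2) ≤ c * (d n - d (n + 1)) + 1 / 4 * (a n + a (n + 1))) :
    Summable a ∧ (∑' n : ℕ, a (T + n + 2)) ≤ 2 * c * d T + 1 / 2 * a T + a (T + 1) := by
  have key : ∀ N, ∑ i ∈ Finset.range N, a (T + i + 2) ≤
      c * (d T - d (T + N)) +
        1 / 4 * ∑ i ∈ Finset.range N, (a (T + i) + a (T + i + 1)) := by
    intro N
    induction N with
    | zero => simp
    | succ N ih =>
      rw [Finset.sum_range_succ, Finset.sum_range_succ]
      have h := hrec (T + N) (Nat.le_add_right _ _)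
      have e : T + (N + 1) = T + N + 1 := rfl
      rw [e]
      linarith
  have hbound : ∀ N, ∑ i ∈ Finset.range N, a (T + i + 2) ≤
      2 * c * d T + 1 / 2 * a T + a (T + 1) := by
    intro N
    have hk := key N
    rw [Finset.sum_add_distrib] at hk
    have h1 : ∑ i ∈ Finset.range N, a (T + i) ≤
        a T + a (T + 1) + ∑ i ∈ Finset.range N, a (T + i + 2) := by
      have hsub : ∑ i ∈ Finset.range N, a (T + i) ≤
          ∑ i ∈ Finset.range (N + 2), a (T + i) :=
        Finset.sum_le_sum_of_subset_of_nonneg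
          (Finset.range_subset_range.2 (by omega)) (fun i _ _ => ha _)
      have heq : ∑ i ∈ Finset.range (N + 2), a (T + i) =
          (∑ i ∈ Finset.range N, a (T + i + 2)) + a (T + 1) + a (T + 0) := by
        rw [Finset.sum_range_succ', Finset.sum_range_succ']
        congr 2
      rw [heq] at hsub
      simp only [Nat.add_zero] at hsub
      linarith
    have h2 : ∑ i ∈ Finset.range N, a (T + i + 1) ≤
        a (T + 1) + ∑ i ∈ Finset.range N, a (T + i + 2) := by
      have hsub : ∑ i ∈ Finset.range N, a (T + i + 1) ≤
          ∑ i ∈ Finset.range (N + 1), a (T + i + 1) :=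
        Finset.sum_le_sum_of_subset_of_nonneg
          (Finset.range_subset_range.2 (by omega)) (fun i _ _ => ha _)
      have heq : ∑ i ∈ Finset.range (N + 1), a (T + i + 1) =
          (∑ i ∈ Finset.range N, a (T + i + 2)) + a (T + 0 + 1) := by
        rw [Finset.sum_range_succ']
        congr 1
      rw [heq] at hsub
      simp only [Nat.add_zero] at hsub
      linarith
    have hcd : 0 ≤ c * d (T + N) := mul_nonneg hc (hd _)
    nlinarith
  have hs2 : Summable (fun n => a (T + n + 2)) :=
    summable_of_sum_range_le (fun n => ha _) hbound
  constructor
  · have : (fun n => a (T + n + 2)) = fun n => a (n + (T + 2)) := by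
      funext n; congr 1; omega
    rw [this] at hs2
    exact (summable_nat_add_iff (T + 2)).1 hs2
  · exact Summable.tsum_le_of_sum_range_le hs2 hbound
end

section
/- Let θ ∈ (1/2, 1), C > 0, and n₀ ∈ ℕ. Let (Ωₙ)_{n ≥ 0} be a nonincreasing sequence of nonnegative real numbers satisfying Ωₙ^{θ/(1−θ)} ≤ C·(Ω_{n−1} − Ωₙ) for all n ≥ n₀. Then there exists a constant C₃ > 0 such that Ωₙ ≤ C₃·n^{−(1−θ)/(2θ−1)} for all sufficiently large n. -/
open Real

/-- Bernoulli-type inequality: for `0 < t ≤ 1` and `β > 0`,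
`1 + β(1 - t) ≤ t^(-β)`. -/
lemma stmt14_bern_aux {t β : ℝ} (ht0 : 0 < t) (ht1 : t ≤ 1) (hβ : 0 < β) :
    1 + β * (1 - t) ≤ t ^ (-β) := by
  rcases le_or_gt 1 β with hβ1 | hβ1
  · have h1t : 0 < 1 / t := by positivity
    have hs : (-1 : ℝ) ≤ 1 / t - 1 := by linarith
    have h := one_add_mul_self_le_rpow_one_add hs hβ1
    have ht : (1 : ℝ) + (1 / t - 1) = 1 / t := by ring
    rw [ht] at h
    have h2 : 1 - t ≤ 1 / t - 1 := by
      have he : 1 / t - 1 = (1 - t) / t := by field_simp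
      rw [he, le_div_iff₀ ht0]
      nlinarith [sq_nonneg (1 - t)]
    have h3 : (1 / t) ^ β = t ^ (-β) := by
      rw [one_div, Real.inv_rpow ht0.le, ← Real.rpow_neg ht0.le]
    calc 1 + β * (1 - t) ≤ 1 + β * (1 / t - 1) := by nlinarith
      _ ≤ (1 / t) ^ β := h
      _ = t ^ (-β) := h3
  · have hs : (-1 : ℝ) ≤ t - 1 := by linarith
    have h := rpow_one_add_le_one_add_mul_self hs hβ.le hβ1.le
    have ht : (1 : ℝ) + (t - 1) = t := by ring
    rw [ht] at h
    have hpos : 0 < 1 + β * (t - 1) := by nlinarith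
    have htβ : 0 < t ^ β := rpow_pos_of_pos ht0 β
    have h4 : (1 + β * (t - 1))⁻¹ ≤ (t ^ β)⁻¹ := by
      exact inv_anti₀ htβ h
    have h5 : 1 + β * (1 - t) ≤ (1 + β * (t - 1))⁻¹ := by
      rw [← one_div, le_div_iff₀ hpos]
      nlinarith [sq_nonneg (β * (1 - t))]
    calc 1 + β * (1 - t) ≤ (1 + β * (t - 1))⁻¹ := h5
      _ ≤ (t ^ β)⁻¹ := h4
      _ = t ^ (-β) := (Real.rpow_neg ht0.le β).symm

/-- Convexity-type inequality for negative powers. -/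
lemma stmt14_bern {x y β : ℝ} (hy : 0 < y) (hxy : y ≤ x) (hβ : 0 < β) :
    x ^ (-β) + β * x ^ (-β - 1) * (x - y) ≤ y ^ (-β) := by
  have hx : 0 < x := lt_of_lt_of_le hy hxy
  have ht0 : 0 < y / x := by positivity
  have ht1 : y / x ≤ 1 := by rw [div_le_one hx]; exact hxy
  have key := stmt14_bern_aux ht0 ht1 hβ
  have hyx : y = (y / x) * x := by field_simp
  have hsplit : y ^ (-β) = (y / x) ^ (-β) * x ^ (-β) := by
    conv_lhs => rw [hyx]
    rw [Real.mul_rpow ht0.le hx.le]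
  rw [hsplit]
  have hxb : 0 < x ^ (-β) := rpow_pos_of_pos hx _
  have h2 : (1 + β * (1 - y / x)) * x ^ (-β) ≤ (y / x) ^ (-β) * x ^ (-β) :=
    mul_le_mul_of_nonneg_right key hxb.le
  refine le_trans (le_of_eq ?_) h2
  have hx1 : x ^ (-β - 1) = x ^ (-β) * x⁻¹ := by
    rw [show -β - 1 = -β + (-1) by ring, Real.rpow_add hx, Real.rpow_neg_one]
  rw [hx1]
  field_simp

/-- abstract sublinear-decay lemma. A nonnegative nonincreasing
sequence `Ω` with `Ωₙ^{θ/(1−θ)} ≤ C(Ω_{n−1} − Ωₙ)` for all `n ≥ n₀`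
(`θ ∈ (1/2,1)`, `C > 0`) decays at the rate `n^{−(1−θ)/(2θ−1)}`. -/
theorem stmt_14 (θ C : ℝ) (n₀ : ℕ) (Ω : ℕ → ℝ)
    (hθ : θ ∈ Set.Ioo (1 / 2 : ℝ) 1) (hC : 0 < C)
    (hΩ : ∀ n, 0 ≤ Ω n) (hmono : ∀ n, Ω (n + 1) ≤ Ω n)
    (hrec : ∀ n : ℕ, n₀ ≤ n + 1 → Ω (n + 1) ^ (θ / (1 - θ)) ≤ C * (Ω n - Ω (n + 1))) :
    ∃ C₃ : ℝ, 0 < C₃ ∧ ∃ N : ℕ, ∀ n : ℕ, N ≤ n →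
      Ω n ≤ C₃ * (n : ℝ) ^ (-(1 - θ) / (2 * θ - 1)) := by
  obtain ⟨hθ1, hθ2⟩ := hθ
  have h1θ : 0 < 1 - θ := by linarith
  have h2θ : 0 < 2 * θ - 1 := by linarith
  set β : ℝ := (2 * θ - 1) / (1 - θ) with hβdef
  have hβ : 0 < β := by positivity
  have hα : θ / (1 - θ) = β + 1 := by rw [hβdef]; field_simp; ring
  have hexp : -(1 - θ) / (2 * θ - 1) = -(1 / β) := by
    rw [hβdef]; field_simp
  have hanti : Antitone Ω := antitone_nat_of_succ_le hmono
  by_cases h0 : Ω n₀ = 0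
  · refine ⟨1, one_pos, max n₀ 1, fun n hn => ?_⟩
    have hn0 : n₀ ≤ n := le_trans (le_max_left _ _) hn
    have hn1 : 1 ≤ n := le_trans (le_max_right _ _) hn
    have hle : Ω n ≤ 0 := h0 ▸ hanti hn0
    have hΩn : Ω n = 0 := le_antisymm hle (hΩ n)
    have hnpos : (0 : ℝ) < (n : ℝ) := by exact_mod_cast hn1
    rw [hΩn]
    positivity
  · have hΩ0 : 0 < Ω n₀ := lt_of_le_of_ne (hΩ n₀) (Ne.symm h0)
    set μ : ℝ := min (β * 2 ^ (-(β + 1)) / C) ((2 ^ β - 1) * Ω n₀ ^ (-β)) with hμdef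
    have h2β : (1 : ℝ) < 2 ^ β := by
      rw [show (1 : ℝ) = 2 ^ (0 : ℝ) by simp]
      exact Real.rpow_lt_rpow_of_exponent_lt one_lt_two hβ
    have hμ : 0 < μ := by
      apply lt_min
      · positivity
      · exact mul_pos (by linarith) (rpow_pos_of_pos hΩ0 _)
    -- key step
    have key : ∀ n : ℕ, n₀ ≤ n → 0 < Ω (n + 1) →
        Ω n ^ (-β) + μ ≤ Ω (n + 1) ^ (-β) := by
      intro n hn hpos1
      have hposn : 0 < Ω n := lt_of_lt_of_le hpos1 (hmono n)
      have hrecn := hrec n (by omega)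
      rw [hα] at hrecn
      rcases le_or_gt (Ω n) (2 * Ω (n + 1)) with hcase | hcase
      · -- Ω (n+1) ≥ Ω n / 2
        have hb := stmt14_bern hpos1 (hmono n) hβ
        have hd : Ω (n + 1) ^ (β + 1) / C ≤ Ω n - Ω (n + 1) := by
          rw [div_le_iff₀ hC]
          linarith [hrecn]
        have h2 : (Ω n / 2) ^ (β + 1) ≤ Ω (n + 1) ^ (β + 1) :=
          Real.rpow_le_rpow (by positivity) (by linarith) (by positivity)
        have h3 : (Ω n / 2) ^ (β + 1) = Ω n ^ (β + 1) * 2 ^ (-(β + 1)) := by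
          rw [div_eq_mul_inv, Real.mul_rpow hposn.le (by norm_num),
            Real.inv_rpow (by norm_num : (0:ℝ) ≤ 2), ← Real.rpow_neg (by norm_num : (0:ℝ) ≤ 2)]
        have h4 : Ω n ^ (-β - 1) * Ω n ^ (β + 1) = 1 := by
          rw [← Real.rpow_add hposn]
          norm_num
        have hA : 0 < Ω n ^ (-β - 1) := rpow_pos_of_pos hposn _
        have step : β * 2 ^ (-(β + 1)) / C ≤ β * Ω n ^ (-β - 1) * (Ω n - Ω (n + 1)) := by
          calc β * 2 ^ (-(β + 1)) / C
              = β * Ω n ^ (-β - 1) * (Ω n ^ (β + 1) * 2 ^ (-(β + 1)) / C) := by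
                rw [show β * Ω n ^ (-β - 1) * (Ω n ^ (β + 1) * 2 ^ (-(β + 1)) / C)
                    = β * (Ω n ^ (-β - 1) * Ω n ^ (β + 1)) * 2 ^ (-(β + 1)) / C by ring,
                  h4, mul_one]
            _ ≤ β * Ω n ^ (-β - 1) * (Ω (n + 1) ^ (β + 1) / C) := by
                have : Ω n ^ (β + 1) * 2 ^ (-(β + 1)) ≤ Ω (n + 1) ^ (β + 1) := h3 ▸ h2
                gcongr
            _ ≤ β * Ω n ^ (-β - 1) * (Ω n - Ω (n + 1)) := by gcongr
        have hμle : μ ≤ β * 2 ^ (-(β + 1)) / C := min_le_left _ _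
        linarith
      · -- Ω (n+1) ≤ Ω n / 2
        have hhalf : Ω (n + 1) ≤ Ω n / 2 := by linarith
        have h1 : (Ω n / 2) ^ (-β) ≤ Ω (n + 1) ^ (-β) :=
          Real.rpow_le_rpow_of_nonpos hpos1 hhalf (by linarith)
        have h2 : (Ω n / 2) ^ (-β) = Ω n ^ (-β) * 2 ^ β := by
          rw [div_eq_mul_inv, Real.mul_rpow hposn.le (by norm_num),
            Real.inv_rpow (by norm_num : (0:ℝ) ≤ 2), ← Real.rpow_neg (by norm_num : (0:ℝ) ≤ 2)]
          norm_num
        have h3 : Ω n₀ ^ (-β) ≤ Ω n ^ (-β) :=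
          Real.rpow_le_rpow_of_nonpos hposn (hanti hn) (by linarith)
        have h4 : 0 < Ω n ^ (-β) := rpow_pos_of_pos hposn _
        have hμle : μ ≤ (2 ^ β - 1) * Ω n₀ ^ (-β) := min_le_right _ _
        have h5 : (2 ^ β - 1) * Ω n₀ ^ (-β) ≤ (2 ^ β - 1) * Ω n ^ (-β) := by
          apply mul_le_mul_of_nonneg_left h3 (by linarith)
        nlinarith [h1, h2]
    -- induction
    have ind : ∀ k : ℕ, 0 < Ω (n₀ + k) → Ω n₀ ^ (-β) + μ * k ≤ Ω (n₀ + k) ^ (-β) := by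
      intro k
      induction k with
      | zero => intro _; simp
      | succ k ih =>
        intro hpos
        have hstep : Ω (n₀ + (k + 1)) = Ω ((n₀ + k) + 1) := by ring_nf
        rw [hstep] at hpos ⊢
        have hprev : 0 < Ω (n₀ + k) := lt_of_lt_of_le hpos (hmono (n₀ + k))
        have ih' := ih hprev
        have hk := key (n₀ + k) (Nat.le_add_right _ _) hpos
        push_cast
        linarith
    refine ⟨(μ / 2) ^ (-(1 / β)), rpow_pos_of_pos (by positivity) _, 2 * n₀ + 2, fun n hn => ?_⟩
    have hnpos : (0 : ℝ) < (n : ℝ) := by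
      have : 2 ≤ n := by omega
      exact_mod_cast Nat.lt_of_lt_of_le Nat.zero_lt_two this
    rw [hexp]
    rcases eq_or_lt_of_le (hΩ n) with hzero | hpos
    · rw [← hzero]
      positivity
    · obtain ⟨k, rfl⟩ : ∃ k, n = n₀ + k := ⟨n - n₀, by omega⟩
      have hind := ind k hpos
      have hk2 : (n₀ + k : ℝ) / 2 ≤ (k : ℝ) := by
        have : n₀ ≤ k := by omega
        have h1 : (n₀ : ℝ) ≤ (k : ℝ) := by exact_mod_cast this
        push_cast
        linarith
      have hb0 : 0 < Ω n₀ ^ (-β) := rpow_pos_of_pos hΩ0 _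
      have hmain : μ * ((n₀ + k : ℕ) : ℝ) / 2 ≤ Ω (n₀ + k) ^ (-β) := by
        have : μ * ((n₀ + k : ℕ) : ℝ) / 2 ≤ μ * k := by
          rw [mul_div_assoc]
          apply mul_le_mul_of_nonneg_left _ hμ.le
          push_cast
          push_cast at hk2
          linarith
        linarith
      set a : ℝ := μ * ((n₀ + k : ℕ) : ℝ) / 2 with hadef
      have ha : 0 < a := by positivity
      have hfin : Ω (n₀ + k) ≤ a ^ (-(1 / β)) := by
        have h6 : (Ω (n₀ + k) ^ (-β)) ^ (-(1 / β)) ≤ a ^ (-(1 / β)) :=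
          Real.rpow_le_rpow_of_nonpos ha hmain (neg_nonpos.mpr (by positivity))
        have h7 : (Ω (n₀ + k) ^ (-β)) ^ (-(1 / β)) = Ω (n₀ + k) := by
          rw [← Real.rpow_mul hpos.le, show -β * -(1 / β) = 1 by field_simp,
            Real.rpow_one]
        rw [← h7]
        exact h6
      have hsplit : a ^ (-(1 / β)) = (μ / 2) ^ (-(1 / β)) * ((n₀ + k : ℕ) : ℝ) ^ (-(1 / β)) := by
        rw [hadef, show μ * ((n₀ + k : ℕ) : ℝ) / 2 = (μ / 2) * ((n₀ + k : ℕ) : ℝ) by ring,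
          Real.mul_rpow (by positivity) (by positivity)]
      rw [hsplit] at hfin
      exact hfin
end

section
/- Let A : X → X be a self-adjoint positive semidefinite continuous linear operator, M : X → X a self-adjoint positive semidefinite continuous linear operator, b₀ ∈ X, δt > 0, and define T := (3/(2·δt))·Id + A and 𝕄 := T + M. Then 𝕄 is positive definite (hence invertible), and for any uⁿ, u^{n−1}, yⁿ ∈ X, functions f : X → X, and bⁿ := b₀ + (1/(2·δt))·(4uⁿ − u^{n−1}) − (2f(uⁿ) − f(u^{n−1})), a point u^{n+1} ∈ X satisfies 0 = (1/(2·δt))·(3u^{n+1} − 4uⁿ + u^{n−1}) + M(u^{n+1} − yⁿ) + (A u^{n+1} − b₀) + (2f(uⁿ) − f(u^{n−1})) if and only if u^{n+1} = yⁿ + 𝕄⁻¹(bⁿ − T yⁿ). -/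
open scoped RealInnerProductSpace

/-- Proposition 4.1: with `T = (3/(2δt))·Id + A` and `𝕄 = T + M`,
the operator `𝕄` is positive definite (hence invertible), and the implicit BDF2
update equation holds iff `u^{n+1} = yⁿ + 𝕄⁻¹(bⁿ − T yⁿ)`. -/
theorem stmt_17
    {X : Type*} [NormedAddCommGroup X] [InnerProductSpace ℝ X] [FiniteDimensional ℝ X]
    (A M : X →L[ℝ] X)
    (hAsa : ∀ x y : X, ⟪A x, y⟫ = ⟪x, A y⟫) (hApsd : ∀ x : X, 0 ≤ ⟪A x, x⟫)
    (hMsa : ∀ x y : X, ⟪M x, y⟫ = ⟪x, M y⟫) (hMpsd : ∀ x : X, 0 ≤ ⟪M x, x⟫)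
    (b₀ : X) (δt : ℝ) (hδt : 0 < δt)
    (T 𝕄 : X →L[ℝ] X)
    (hT : T = (3 / (2 * δt)) • ContinuousLinearMap.id ℝ X + A)
    (h𝕄 : 𝕄 = T + M) :
    (∀ x : X, x ≠ 0 → 0 < ⟪𝕄 x, x⟫)
      ∧ ∃ 𝕄inv : X →L[ℝ] X,
        (∀ x : X, 𝕄inv (𝕄 x) = x ∧ 𝕄 (𝕄inv x) = x)
          ∧ ∀ (un unm1 yn : X) (f : X → X) (bn : X),
            bn = b₀ + (1 / (2 * δt)) • ((4 : ℝ) • un - unm1)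
              - ((2 : ℝ) • f un - f unm1) →
            ∀ unext : X,
              ((0 : X) = (1 / (2 * δt)) • ((3 : ℝ) • unext - (4 : ℝ) • un + unm1)
                  + M (unext - yn) + (A unext - b₀)
                  + ((2 : ℝ) • f un - f unm1))
                ↔ unext = yn + 𝕄inv (bn - T yn) := by
  have hc : 0 < 3 / (2 * δt) := by positivity
  have h𝕄app : ∀ x : X, 𝕄 x = (3 / (2 * δt)) • x + A x + M x := by
    intro x
    simp [h𝕄, hT, add_assoc]
  have hpos : ∀ x : X, x ≠ 0 → 0 < ⟪𝕄 x, x⟫ := by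
    intro x hx
    rw [h𝕄app, inner_add_left, inner_add_left, real_inner_smul_left]
    have h1 : 0 < 3 / (2 * δt) * ⟪x, x⟫ := by
      apply mul_pos hc
      rw [real_inner_self_eq_norm_sq]
      exact pow_pos (norm_pos_iff.mpr hx) 2
    linarith [hApsd x, hMpsd x]
  have hinj : Function.Injective 𝕄 := by
    intro x y hxy
    by_contra hne
    have h0 : 𝕄 (x - y) = 0 := by rw [map_sub, hxy, sub_self]
    have := hpos (x - y) (sub_ne_zero.2 hne)
    rw [h0] at this
    simp at this
  have hbij : Function.Bijective (𝕄 : X →ₗ[ℝ] X) :=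
    ⟨hinj, (LinearMap.injective_iff_surjective).1 hinj⟩
  let e : X ≃ₗ[ℝ] X := LinearEquiv.ofBijective (𝕄 : X →ₗ[ℝ] X) hbij
  let Minv : X →L[ℝ] X := LinearMap.toContinuousLinearMap (e.symm : X →ₗ[ℝ] X)
  have hMinvL : ∀ x : X, Minv (𝕄 x) = x := fun x =>
    e.symm_apply_apply x
  have hMinvR : ∀ x : X, 𝕄 (Minv x) = x := fun x =>
    e.apply_symm_apply x
  refine ⟨hpos, Minv, fun x => ⟨hMinvL x, hMinvR x⟩, ?_⟩
  intro un unm1 yn f bn hbn unext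
  have hexp : (1 / (2 * δt)) • ((3 : ℝ) • unext - (4 : ℝ) • un + unm1)
      + M (unext - yn) + (A unext - b₀) + ((2 : ℝ) • f un - f unm1)
      = 𝕄 unext - (bn + M yn) := by
    rw [h𝕄app, hbn, map_sub]
    match_scalars <;> field_simp
  have key : ((0 : X) = (1 / (2 * δt)) • ((3 : ℝ) • unext - (4 : ℝ) • un + unm1)
      + M (unext - yn) + (A unext - b₀) + ((2 : ℝ) • f un - f unm1))
      ↔ 𝕄 unext = bn + M yn := by
    rw [hexp, eq_comm, sub_eq_zero]
  rw [key]
  have h2 : 𝕄 (yn + Minv (bn - T yn)) = bn + M yn := by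
    rw [map_add, hMinvR, h𝕄]
    simp only [ContinuousLinearMap.add_apply]
    abel
  constructor
  · intro h
    have := congrArg Minv (h.trans h2.symm)
    rwa [hMinvL, hMinvL] at this
  · intro h
    rw [h, h2]
end
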